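/- Let d ≥ 2 and let T_d be the d-ary tree with root x₀. Then |F^n_{r,T_d}(x₀)| = 0 for n < d, and for all n ≥ d: |F^n_{r,T_d}(x₀)| = a_n − Σ_{m₁+⋯+m_d = n, mᵢ ≥ 1} a_{m₁}⋯a_{m_d}, where a_m = |F^m_{T_d}(x₀)| and F^n_{r,T_d}(x₀) is the set of rooted contours of T_d of size n. -/

import Mathlib

/-!
A contour of `T_d` whose finite component contains the root `[]` is exactly the edge
boundary `∂S` of a finite subtree `S ∋ []` closed under taking parents, and `S` is recovered
from `∂S` as the component of the root; so `a_n` counts such subtrees with `|∂S| = n`, and the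
rooted contours are those for which some child `[i]` of the root lies outside `S`. Counting
the pairs (vertex of `S`, child) gives `|∂S| + |S| = d|S| + 1`, so `|∂S| ≥ d`. A subtree
containing every child `[i]` is the union of the root and `d` branches, each a subtree of a
copy of `T_d`, and the identity above makes the boundary sizes add up; hence the non-rooted
contours of size `n` are counted by `Σ_{m₁+⋯+m_d = n} a_{m₁} ⋯ a_{m_d}`, where the summands
with some `mᵢ = 0` vanish.
-/

open SimpleGraph

/-- The `d`-ary tree: vertices are finite words over `Fin d`, the root is `[]`,
and each vertex `l` is adjacent to its `d` children `a :: l`. -/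
def daryTree (d : ℕ) : SimpleGraph (List (Fin d)) where
  Adj x y := (∃ a, y = a :: x) ∨ (∃ a, x = a :: y)
  symm := by
    constructor
    intro x y h
    rcases h with ⟨a, ha⟩ | ⟨a, ha⟩
    · exact Or.inr ⟨a, ha⟩
    · exact Or.inl ⟨a, ha⟩
  loopless := by
    constructor
    intro x h
    rcases h with ⟨a, ha⟩ | ⟨a, ha⟩ <;>
    · apply_fun List.length at ha
      simp at ha

/-- `C` is a contour of `G`: a finite set of edges whose deletion leaves exactly one
finite connected component, minimal with this property. -/
def IsContour {V : Type*} (G : SimpleGraph V) (C : Set (Sym2 V)) : Prop :=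
  C.Finite ∧ C ⊆ G.edgeSet ∧
    (∃! K : (G.deleteEdges C).ConnectedComponent, K.supp.Finite) ∧
    ∀ e ∈ C, ∀ K : (G.deleteEdges (C \ {e})).ConnectedComponent, ¬ K.supp.Finite

/-- `I` is the (unique) finite connected component `I_C` of `G \ C`. -/
def IsInterior {V : Type*} (G : SimpleGraph V) (C : Set (Sym2 V)) (I : Set V) : Prop :=
  I.Finite ∧ ∃ K : (G.deleteEdges C).ConnectedComponent, K.supp = I

/-- `F^n_G(x)`: the set of contours of `G` of size `n` whose finite component contains `x`. -/
def contours {V : Type*} (G : SimpleGraph V) (x : V) (n : ℕ) : Set (Set (Sym2 V)) :=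
  {C | IsContour G C ∧ C.ncard = n ∧
    ((G.deleteEdges C).connectedComponentMk x).supp.Finite}

/-- Rooted contours: contours in `F^n_G(x)` containing an edge incident with `x`. -/
def rootedContours {V : Type*} (G : SimpleGraph V) (x : V) (n : ℕ) : Set (Set (Sym2 V)) :=
  {C | C ∈ contours G x n ∧ ∃ e ∈ C, x ∈ e}

/-- `G` has an infinite independent path: a one-sided infinite path all of whose
vertices other than possibly the initial one have degree two in `G`. -/
def HasInfiniteIndependentPath {V : Type*} (G : SimpleGraph V) : Prop :=
  ∃ f : ℕ → V, Function.Injective f ∧ (∀ i, G.Adj (f i) (f (i + 1))) ∧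
    ∀ i, 1 ≤ i → (G.neighborSet (f i)).ncard = 2


open Finset

section Subtree

variable {α : Type*}

structure IsSubtree (S : Finset (List α)) : Prop where
  nil_mem : [] ∈ S
  mem_of_cons_mem {a : α} {l : List α} : a :: l ∈ S → l ∈ S

theorem IsSubtree.mem_of_suffix {S : Finset (List α)} (hS : IsSubtree S) {l m : List α}
    (h : l <:+ m) (hm : m ∈ S) : l ∈ S := by
  obtain ⟨t, rfl⟩ := h
  induction t with
  | nil => exact hm
  | cons a t ih => exact ih (hS.mem_of_cons_mem hm)

theorem IsSubtree.length_lt_card {S : Finset (List α)} (hS : IsSubtree S) {x : List α}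
    (hx : x ∈ S) : x.length < #S := by
  have : #(range (x.length + 1)) ≤ #S := by
    refine card_le_card_of_injOn x.drop (fun k _ => hS.mem_of_suffix (x.drop_suffix k) hx) ?_
    intro k hk k' hk' h
    simp only [coe_range, Set.mem_Iio] at hk hk'
    have := congrArg List.length h
    simp only [List.length_drop] at this
    omega
  simpa using this

theorem sym2_mk_cons_eq_iff {l l' : List α} {a a' : α} :
    s(l, a :: l) = s(l', a' :: l') ↔ l = l' ∧ a = a' := by
  refine ⟨fun h => ?_, by rintro ⟨rfl, rfl⟩; rfl⟩
  rcases Sym2.eq_iff.mp h with ⟨h1, h2⟩ | ⟨h1, h2⟩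
  · exact ⟨h1, (List.cons_eq_cons.mp h2).1⟩
  · subst h2
    have := congrArg List.length h1
    simp at this
    omega

/-- Children are prepended, so the descendants of `[i]` are the words `y ++ [i]`: this is the
part of `S` below `[i]`, re-rooted at `[]`. -/
noncomputable def branch (S : Finset (List α)) (i : α) : Finset (List α) :=
  S.preimage (· ++ [i]) (List.append_left_injective [i]).injOn

@[simp]
theorem mem_branch {S : Finset (List α)} {i : α} {y : List α} :
    y ∈ branch S i ↔ y ++ [i] ∈ S := by
  simp [branch]

theorem IsSubtree.branch {S : Finset (List α)} (hS : IsSubtree S) {i : α} (hi : [i] ∈ S) :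
    IsSubtree (branch S i) where
  nil_mem := by simpa using hi
  mem_of_cons_mem h := by
    simp only [mem_branch, List.cons_append] at h ⊢
    exact hS.mem_of_cons_mem h

variable [Fintype α] [DecidableEq α]

def joinAtRoot (f : α → Finset (List α)) : Finset (List α) :=
  insert [] (univ.biUnion fun i => (f i).map ⟨(· ++ [i]), List.append_left_injective [i]⟩)

theorem mem_joinAtRoot {f : α → Finset (List α)} {x : List α} :
    x ∈ joinAtRoot f ↔ x = [] ∨ ∃ i, ∃ y ∈ f i, x = y ++ [i] := by
  simp only [joinAtRoot, mem_insert, mem_biUnion, mem_univ, true_and, mem_map,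
    Function.Embedding.coeFn_mk]
  grind

theorem IsSubtree.joinAtRoot {f : α → Finset (List α)} (hf : ∀ i, IsSubtree (f i)) :
    IsSubtree (joinAtRoot f) where
  nil_mem := mem_joinAtRoot.mpr (.inl rfl)
  mem_of_cons_mem {a l} h := by
    obtain h | ⟨i, y, hy, hay⟩ := mem_joinAtRoot.mp h
    · exact absurd h (List.cons_ne_nil a l)
    · refine mem_joinAtRoot.mpr ?_
      cases y with
      | nil => exact .inl (List.cons_eq_cons.mp hay).2
      | cons c y =>
        obtain ⟨rfl, rfl⟩ := List.cons_eq_cons.mp hay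
        exact .inr ⟨i, y, (hf i).mem_of_cons_mem hy, rfl⟩

theorem branch_joinAtRoot (f : α → Finset (List α)) : branch (joinAtRoot f) = f := by
  ext i y
  simp only [mem_branch, mem_joinAtRoot, List.append_eq_nil_iff, List.cons_ne_nil, and_false,
    false_or]
  constructor
  · rintro ⟨j, z, hz, h⟩
    obtain ⟨rfl, hij⟩ := List.append_inj' h rfl
    rwa [List.singleton_inj.mp hij]
  · exact fun hy => ⟨i, y, hy, rfl⟩

theorem joinAtRoot_branch {S : Finset (List α)} (hS : [] ∈ S) : joinAtRoot (branch S) = S := by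
  ext x
  rw [mem_joinAtRoot]
  constructor
  · rintro (rfl | ⟨i, y, hy, rfl⟩)
    · exact hS
    · exact mem_branch.mp hy
  · intro hx
    rcases List.eq_nil_or_concat' x with rfl | ⟨y, i, rfl⟩
    · exact .inl rfl
    · exact .inr ⟨i, y, mem_branch.mpr hx, rfl⟩

theorem card_joinAtRoot (f : α → Finset (List α)) : #(joinAtRoot f) = ∑ i, #(f i) + 1 := by
  rw [joinAtRoot, card_insert_of_notMem, card_biUnion]
  · simp only [card_map]
  · intro i _ j _ hij
    simp only [Function.onFun, Finset.disjoint_left, mem_map, Function.Embedding.coeFn_mk]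
    rintro _ ⟨y, -, rfl⟩ ⟨z, -, h⟩
    exact hij (List.singleton_inj.mp (List.append_inj' h rfl).2).symm
  · simp

end Subtree

section Boundary

variable {d : ℕ}

def edgeBoundary (S : Finset (List (Fin d))) : Finset (Sym2 (List (Fin d))) :=
  ((S ×ˢ univ).filter fun p => p.2 :: p.1 ∉ S).image fun p => s(p.1, p.2 :: p.1)

theorem mem_edgeBoundary {S : Finset (List (Fin d))} {e : Sym2 (List (Fin d))} :
    e ∈ edgeBoundary S ↔ ∃ l ∈ S, ∃ a, a :: l ∉ S ∧ s(l, a :: l) = e := by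
  simp [edgeBoundary, and_assoc]

theorem IsSubtree.card_edgeBoundary_add_card {S : Finset (List (Fin d))} (hS : IsSubtree S) :
    #(edgeBoundary S) + #S = d * #S + 1 := by
  have hout : #(edgeBoundary S) = #((S ×ˢ univ).filter fun p => p.2 :: p.1 ∉ S) :=
    card_image_of_injOn fun p _ q _ h => Prod.ext_iff.mpr (sym2_mk_cons_eq_iff.mp h)
  have hin : #((S ×ˢ univ).filter fun p => p.2 :: p.1 ∈ S) = #(S.erase []) := by
    refine card_bij (fun p _ => p.2 :: p.1) (fun p hp => ?_) (fun p _ q _ h => ?_) (fun x hx => ?_)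
    · simp only [mem_filter] at hp
      simp [hp.2]
    · obtain ⟨h1, h2⟩ := List.cons_eq_cons.mp h
      exact Prod.ext h2 h1
    · obtain ⟨hne, hx⟩ := mem_erase.mp hx
      obtain ⟨a, l, rfl⟩ := List.exists_cons_of_ne_nil hne
      exact ⟨(l, a), by simp [hx, hS.mem_of_cons_mem hx], rfl⟩
  have hsplit := card_filter_add_card_filter_not (s := S ×ˢ (univ : Finset (Fin d)))
    (fun p => p.2 :: p.1 ∈ S)
  rw [card_product, card_univ, Fintype.card_fin, hin, ← hout, card_erase_of_mem hS.nil_mem]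
    at hsplit
  have := card_pos.mpr ⟨_, hS.nil_mem⟩
  rw [mul_comm]
  omega

theorem IsSubtree.le_card_edgeBoundary {S : Finset (List (Fin d))} (hS : IsSubtree S) :
    d ≤ #(edgeBoundary S) := by
  have := hS.card_edgeBoundary_add_card
  have := card_pos.mpr ⟨_, hS.nil_mem⟩
  nlinarith

theorem IsSubtree.card_le_card_edgeBoundary (hd : 2 ≤ d) {S : Finset (List (Fin d))}
    (hS : IsSubtree S) : #S ≤ #(edgeBoundary S) := by
  have := hS.card_edgeBoundary_add_card
  nlinarith

theorem card_edgeBoundary_joinAtRoot {f : Fin d → Finset (List (Fin d))}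
    (hf : ∀ i, IsSubtree (f i)) :
    #(edgeBoundary (joinAtRoot f)) = ∑ i, #(edgeBoundary (f i)) := by
  have hjoin := (IsSubtree.joinAtRoot hf).card_edgeBoundary_add_card
  have hparts : ∑ i, #(edgeBoundary (f i)) + ∑ i, #(f i) = d * ∑ i, #(f i) + d := by
    calc ∑ i, #(edgeBoundary (f i)) + ∑ i, #(f i)
        = ∑ i, (d * #(f i) + 1) := by
          rw [← sum_add_distrib]
          exact sum_congr rfl fun i _ => (hf i).card_edgeBoundary_add_card
      _ = d * ∑ i, #(f i) + d := by simp [sum_add_distrib, mul_sum]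
  rw [card_joinAtRoot] at hjoin
  linarith

end Boundary

section Contour

variable {d : ℕ} {S : Finset (List (Fin d))} {C : Set (Sym2 (List (Fin d)))}

theorem deleteEdges_adj_cons_of_subset_edgeBoundary (hC : C ⊆ ↑(edgeBoundary S)) {a : Fin d}
    {l : List (Fin d)} (h : a :: l ∈ S ∨ l ∉ S) :
    ((daryTree d).deleteEdges C).Adj l (a :: l) := by
  refine (deleteEdges_adj ..).mpr ⟨.inl ⟨a, rfl⟩, fun he => ?_⟩
  obtain ⟨l', hl', a', ha', heq⟩ := mem_edgeBoundary.mp (hC he)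
  obtain ⟨rfl, rfl⟩ := sym2_mk_cons_eq_iff.mp heq
  tauto

theorem IsSubtree.mem_of_reachable (hS : IsSubtree S) (hC : ↑(edgeBoundary S) ⊆ C)
    {u v : List (Fin d)} (h : ((daryTree d).deleteEdges C).Reachable u v) (hu : u ∈ S) :
    v ∈ S := by
  obtain ⟨p⟩ := h
  induction p with
  | nil => exact hu
  | @cons u w v h _ ih =>
    obtain ⟨hadj, hne⟩ := (deleteEdges_adj ..).mp h
    apply ih
    rcases hadj with ⟨a, rfl⟩ | ⟨a, rfl⟩
    · by_contra hw
      exact hne (hC (mem_edgeBoundary.mpr ⟨u, hu, a, hw, rfl⟩))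
    · exact hS.mem_of_cons_mem hu

theorem IsSubtree.reachable_nil (hS : IsSubtree S) (hC : C ⊆ ↑(edgeBoundary S))
    {x : List (Fin d)} (hx : x ∈ S) : ((daryTree d).deleteEdges C).Reachable [] x := by
  induction x with
  | nil => rfl
  | cons a l ih =>
    exact (ih (hS.mem_of_cons_mem hx)).trans
      (deleteEdges_adj_cons_of_subset_edgeBoundary hC (.inl hx)).reachable

theorem IsSubtree.reachable_append (hS : IsSubtree S) (hC : C ⊆ ↑(edgeBoundary S))
    {x : List (Fin d)} (hx : x ∉ S) (w : List (Fin d)) :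
    ((daryTree d).deleteEdges C).Reachable x (w ++ x) := by
  induction w with
  | nil => rfl
  | cons a w ih =>
    exact ih.trans (deleteEdges_adj_cons_of_subset_edgeBoundary hC
      (.inr fun hw => hx (hS.mem_of_suffix (List.suffix_append w x) hw))).reachable

theorem IsSubtree.infinite_supp_of_notMem (hd : 0 < d) (hS : IsSubtree S)
    (hC : C ⊆ ↑(edgeBoundary S)) {x : List (Fin d)} (hx : x ∉ S) :
    (((daryTree d).deleteEdges C).connectedComponentMk x).supp.Infinite := by
  refine Set.infinite_of_injective_forall_mem
    (f := fun k => List.replicate k (⟨0, hd⟩ : Fin d) ++ x) (fun k₁ k₂ h => ?_) fun k => ?_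
  · simpa using congrArg List.length h
  · exact ConnectedComponent.sound (hS.reachable_append hC hx _).symm

theorem IsSubtree.supp_connectedComponentMk_nil (hS : IsSubtree S) :
    (((daryTree d).deleteEdges ↑(edgeBoundary S)).connectedComponentMk []).supp = ↑S := by
  ext v
  rw [ConnectedComponent.mem_supp_iff, ConnectedComponent.eq]
  exact ⟨fun h => hS.mem_of_reachable subset_rfl h.symm hS.nil_mem,
    fun h => (hS.reachable_nil subset_rfl h).symm⟩

theorem IsSubtree.isContour_edgeBoundary (hd : 0 < d) (hS : IsSubtree S) :
    IsContour (daryTree d) ↑(edgeBoundary S) := by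
  refine ⟨(edgeBoundary S).finite_toSet, fun e he => ?_,
    ⟨((daryTree d).deleteEdges _).connectedComponentMk [], ?_, fun K hK => ?_⟩,
    fun e he K => ?_⟩
  · obtain ⟨l, -, a, -, rfl⟩ := mem_edgeBoundary.mp he
    exact .inl ⟨a, rfl⟩
  · beta_reduce
    rw [hS.supp_connectedComponentMk_nil]
    exact S.finite_toSet
  · induction K using ConnectedComponent.ind with
    | h x =>
      by_cases hx : x ∈ S
      · exact ConnectedComponent.sound (hS.reachable_nil subset_rfl hx).symm
      · exact absurd hK (hS.infinite_supp_of_notMem hd subset_rfl hx)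
  · obtain ⟨l, hl, a, ha, rfl⟩ := mem_edgeBoundary.mp he
    have hC : (↑(edgeBoundary S) \ {s(l, a :: l)} : Set _) ⊆ ↑(edgeBoundary S) :=
      Set.sdiff_subset
    induction K using ConnectedComponent.ind with
    | h x =>
      by_cases hx : x ∈ S
      · -- the restored edge joins the root component to the infinite one of `a :: l`
        have hadj :
            ((daryTree d).deleteEdges (↑(edgeBoundary S) \ {s(l, a :: l)})).Adj l (a :: l) :=
          (deleteEdges_adj ..).mpr ⟨.inl ⟨a, rfl⟩, by simp⟩
        rw [ConnectedComponent.sound ((hS.reachable_nil hC hx).symm.trans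
          ((hS.reachable_nil hC hl).trans hadj.reachable))]
        exact hS.infinite_supp_of_notMem hd hC ha
      · exact hS.infinite_supp_of_notMem hd hC hx

theorem reachable_of_walk_of_suffix {l : List (Fin d)} {x y : List (Fin d)}
    (p : ((daryTree d).deleteEdges C).Walk x y) (hly : l <:+ y) (hlx : ¬ l <:+ x) :
    ((daryTree d).deleteEdges C).Reachable x l := by
  induction p with
  | nil => exact absurd hly hlx
  | @cons u w v h _ ih =>
    by_cases hlw : l <:+ w
    · rcases ((deleteEdges_adj ..).mp h).1 with ⟨a, rfl⟩ | ⟨a, rfl⟩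
      · rcases List.suffix_cons_iff.mp hlw with rfl | hlu
        · exact h.reachable
        · exact absurd hlu hlx
      · exact absurd (hlw.trans (List.suffix_cons a w)) hlx
    · exact h.reachable.trans (ih hly hlw)

theorem IsContour.exists_isSubtree_eq_edgeBoundary (hC : IsContour (daryTree d) C)
    (hfin : (((daryTree d).deleteEdges C).connectedComponentMk []).supp.Finite) :
    ∃ S : Finset (List (Fin d)), IsSubtree S ∧ C = ↑(edgeBoundary S) := by
  set S := hfin.toFinset
  have hmemS : ∀ v, v ∈ S ↔ ((daryTree d).deleteEdges C).Reachable [] v := fun v => by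
    rw [Set.Finite.mem_toFinset, ConnectedComponent.mem_supp_iff, ConnectedComponent.eq,
      reachable_comm]
  have hS : IsSubtree S := by
    refine ⟨(hmemS _).mpr Reachable.rfl, fun {a l} h => (hmemS _).mpr ?_⟩
    obtain ⟨p⟩ := (hmemS _).mp h
    by_cases hl : l = []
    · exact hl ▸ Reachable.rfl
    · exact reachable_of_walk_of_suffix p (List.suffix_cons a l) (by simpa using hl)
  have hsub : ↑(edgeBoundary S) ⊆ C := by
    intro e he
    obtain ⟨l, hl, a, ha, rfl⟩ := mem_edgeBoundary.mp he
    by_contra hnot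
    exact ha ((hmemS _).mpr (((hmemS _).mp hl).trans
      ((deleteEdges_adj ..).mpr ⟨Or.inl ⟨a, rfl⟩, hnot⟩).reachable))
  refine ⟨S, hS, Set.Subset.antisymm (fun e he => ?_) hsub⟩
  by_contra hnot
  -- deleting `C \ {e}` still cuts off `S`, so the root component stays finite
  have hsub' : ↑(edgeBoundary S) ⊆ C \ {e} :=
    fun f hf => ⟨hsub hf, fun hfe => hnot (hfe ▸ hf)⟩
  refine hC.2.2.2 e he (((daryTree d).deleteEdges (C \ {e})).connectedComponentMk [])
    (S.finite_toSet.subset fun v hv => ?_)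
  rw [ConnectedComponent.mem_supp_iff, ConnectedComponent.eq] at hv
  exact hS.mem_of_reachable hsub' hv.symm hS.nil_mem

end Contour

section Counting

variable {d : ℕ}

open scoped Classical in
/-- The length bound loses nothing when `2 ≤ d`, since then the words of a subtree are shorter
than `|S| ≤ |∂S|` (`mem_subtreesWithBoundary`). -/
noncomputable def subtreesWithBoundary (d n : ℕ) : Finset (Finset (List (Fin d))) :=
  (List.finite_length_lt (Fin d) n).toFinset.powerset.filter
    fun S => IsSubtree S ∧ #(edgeBoundary S) = n

theorem mem_subtreesWithBoundary (hd : 2 ≤ d) {n : ℕ} {S : Finset (List (Fin d))} :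
    S ∈ subtreesWithBoundary d n ↔ IsSubtree S ∧ #(edgeBoundary S) = n := by
  classical
  rw [subtreesWithBoundary, mem_filter, and_iff_right_iff_imp, mem_powerset]
  rintro ⟨hS, rfl⟩ x hx
  rw [Set.Finite.mem_toFinset, Set.mem_ofPred_eq]
  exact (hS.length_lt_card hx).trans_le (hS.card_le_card_edgeBoundary hd)

theorem subtreesWithBoundary_eq_empty (hd : 2 ≤ d) {n : ℕ} (hn : n < d) :
    subtreesWithBoundary d n = ∅ :=
  eq_empty_of_forall_notMem fun _ hS => by
    obtain ⟨hsub, rfl⟩ := (mem_subtreesWithBoundary hd).mp hS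
    exact hn.not_ge hsub.le_card_edgeBoundary

theorem injOn_edgeBoundary :
    Set.InjOn (fun S : Finset (List (Fin d)) => (edgeBoundary S : Set (Sym2 (List (Fin d)))))
      {S | IsSubtree S} :=
  fun S₁ h₁ S₂ h₂ h => by
    have := h₂.supp_connectedComponentMk_nil
    rw [← show (edgeBoundary S₁ : Set (Sym2 (List (Fin d)))) = edgeBoundary S₂ from h,
      h₁.supp_connectedComponentMk_nil] at this
    exact coe_injective this

theorem contours_daryTree_eq_image (hd : 2 ≤ d) (n : ℕ) :
    contours (daryTree d) [] n =
      (fun S : Finset (List (Fin d)) => (↑(edgeBoundary S) : Set _)) ''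
        (subtreesWithBoundary d n : Set _) := by
  ext C
  constructor
  · rintro ⟨hC, hcard, hfin⟩
    obtain ⟨S, hS, rfl⟩ := hC.exists_isSubtree_eq_edgeBoundary hfin
    rw [Set.ncard_coe_finset] at hcard
    exact ⟨S, (mem_subtreesWithBoundary hd).mpr ⟨hS, hcard⟩, rfl⟩
  · rintro ⟨S, hS, rfl⟩
    obtain ⟨hS, hcard⟩ := (mem_subtreesWithBoundary hd).mp hS
    refine ⟨hS.isContour_edgeBoundary (by omega), by rwa [Set.ncard_coe_finset], ?_⟩
    rw [hS.supp_connectedComponentMk_nil]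
    exact S.finite_toSet

theorem exists_nil_mem_edgeBoundary_iff {S : Finset (List (Fin d))} (hS : [] ∈ S) :
    (∃ e ∈ edgeBoundary S, [] ∈ e) ↔ ∃ i, [i] ∉ S := by
  constructor
  · rintro ⟨e, he, hroot⟩
    obtain ⟨l, -, a, ha, rfl⟩ := mem_edgeBoundary.mp he
    rcases Sym2.mem_iff.mp hroot with rfl | h
    · exact ⟨a, ha⟩
    · exact absurd h.symm (List.cons_ne_nil a l)
  · rintro ⟨i, hi⟩
    exact ⟨s([], [i]), mem_edgeBoundary.mpr ⟨[], hS, i, hi, rfl⟩, Sym2.mem_mk_left _ _⟩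

theorem rootedContours_daryTree_eq_image (hd : 2 ≤ d) (n : ℕ) :
    rootedContours (daryTree d) [] n =
      (fun S : Finset (List (Fin d)) => (↑(edgeBoundary S) : Set _)) ''
        (((subtreesWithBoundary d n).filter fun S => ∃ i, [i] ∉ S) : Set _) := by
  ext C
  simp only [rootedContours, Set.mem_ofPred_eq, contours_daryTree_eq_image hd, coe_filter,
    Set.mem_image]
  constructor
  · rintro ⟨⟨S, hS, rfl⟩, hroot⟩
    exact ⟨S, ⟨hS, (exists_nil_mem_edgeBoundary_iff
      ((mem_subtreesWithBoundary hd).mp hS).1.nil_mem).mp hroot⟩, rfl⟩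
  · rintro ⟨S, ⟨hS, hroot⟩, rfl⟩
    exact ⟨⟨S, hS, rfl⟩, (exists_nil_mem_edgeBoundary_iff
      ((mem_subtreesWithBoundary hd).mp hS).1.nil_mem).mpr hroot⟩

theorem ncard_image_edgeBoundary {B : Finset (Finset (List (Fin d)))}
    (hB : ∀ S ∈ B, IsSubtree S) :
    ((fun S => (edgeBoundary S : Set (Sym2 (List (Fin d))))) ''
      (B : Set (Finset (List (Fin d))))).ncard = #B := by
  rw [(injOn_edgeBoundary.mono hB).ncard_image, Set.ncard_coe_finset]

theorem card_filter_forall_singleton_mem (hd : 2 ≤ d) (n : ℕ) :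
    #((subtreesWithBoundary d n).filter fun S => ∀ i, [i] ∈ S) =
      ∑ m ∈ Nat.antidiagonalTuple d n, ∏ i, #(subtreesWithBoundary d (m i)) := by
  simp only [← Fintype.card_piFinset, ← card_sigma]
  refine card_nbij' (fun S => ⟨fun i => #(edgeBoundary (branch S i)), branch S⟩)
    (fun p => joinAtRoot p.2) ?_ ?_ ?_ ?_
  · intro S hS
    obtain ⟨hmem, hroot⟩ := mem_filter.mp hS
    obtain ⟨hsub, rfl⟩ := (mem_subtreesWithBoundary hd).mp hmem
    have hbranch : ∀ i, IsSubtree (branch S i) := fun i => hsub.branch (hroot i)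
    refine mem_sigma.mpr ⟨?_, Fintype.mem_piFinset.mpr fun i =>
      (mem_subtreesWithBoundary hd).mpr ⟨hbranch i, rfl⟩⟩
    rw [Nat.mem_antidiagonalTuple, ← card_edgeBoundary_joinAtRoot hbranch,
      joinAtRoot_branch hsub.nil_mem]
  · rintro ⟨m, f⟩ hp
    obtain ⟨hm, hf⟩ := mem_sigma.mp hp
    have hf' i := (mem_subtreesWithBoundary hd).mp (Fintype.mem_piFinset.mp hf i)
    refine mem_filter.mpr ⟨(mem_subtreesWithBoundary hd).mpr
      ⟨IsSubtree.joinAtRoot fun i => (hf' i).1, ?_⟩,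
      fun i => mem_joinAtRoot.mpr (.inr ⟨i, [], (hf' i).1.nil_mem, rfl⟩)⟩
    rw [card_edgeBoundary_joinAtRoot fun i => (hf' i).1, ← Nat.mem_antidiagonalTuple.mp hm]
    exact sum_congr rfl fun i _ => (hf' i).2
  · intro S hS
    exact joinAtRoot_branch ((mem_subtreesWithBoundary hd).mp (mem_filter.mp hS).1).1.nil_mem
  · rintro ⟨m, f⟩ hp
    have hf' i := (mem_subtreesWithBoundary hd).mp (Fintype.mem_piFinset.mp (mem_sigma.mp hp).2 i)
    simp only [branch_joinAtRoot, (hf' _).2]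

end Counting

/-- For the `d`-ary tree (`d ≥ 2`) with root `x₀`: there are no rooted
contours of size `n < d`, and for `n ≥ d`,
`|F^n_{r,T_d}(x₀)| = a_n - Σ_{m₁+⋯+m_d = n, mᵢ ≥ 1} a_{m₁} ⋯ a_{m_d}`,
where `a_m = |F^m_{T_d}(x₀)|`. -/
theorem card_rootedContours_daryTree (d : ℕ) (hd : 2 ≤ d)
    (a : ℕ → ℕ) (ha : ∀ m, a m = (contours (daryTree d) ([] : List (Fin d)) m).ncard)
    (n : ℕ) :
    (n < d → (rootedContours (daryTree d) ([] : List (Fin d)) n).ncard = 0) ∧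
    (d ≤ n → (rootedContours (daryTree d) ([] : List (Fin d)) n).ncard =
      a n - ∑ m ∈ (Finset.Nat.antidiagonalTuple d n).filter (fun m => ∀ i, 1 ≤ m i),
        ∏ i, a (m i)) := by
  have ha' m : a m = #(subtreesWithBoundary d m) := by
    rw [ha, contours_daryTree_eq_image hd,
      ncard_image_edgeBoundary fun S hS => ((mem_subtreesWithBoundary hd).mp hS).1]
  rw [rootedContours_daryTree_eq_image hd, ncard_image_edgeBoundary fun S hS =>
    ((mem_subtreesWithBoundary hd).mp (mem_filter.mp hS).1).1]
  refine ⟨fun hn => by simp [subtreesWithBoundary_eq_empty hd hn], fun _ => ?_⟩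
  have hsum :
      ∑ m ∈ (Nat.antidiagonalTuple d n).filter (fun m => ∀ i, 1 ≤ m i), ∏ i, a (m i) =
      ∑ m ∈ Nat.antidiagonalTuple d n, ∏ i, #(subtreesWithBoundary d (m i)) := by
    simp only [ha']
    refine sum_filter_of_ne fun m _ hm i => Nat.one_le_iff_ne_zero.mpr fun h0 =>
      hm (prod_eq_zero (mem_univ i) ?_)
    rw [h0, subtreesWithBoundary_eq_empty hd (by omega), card_empty]
  rw [hsum, ← card_filter_forall_singleton_mem hd, ha',
    ← card_filter_add_card_filter_not (s := subtreesWithBoundary d n) (fun S => ∃ i, [i] ∉ S)]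
  simp only [not_exists, not_not, Nat.add_sub_cancel]
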